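/- arXiv:1708.00487 — 3 statements merged into one kernel-verified Lean document; each statement's English description precedes it below -/
import Mathlib

section
/- Let E be a k-dimensional subspace of a Banach space B. Then there exists an inner product ⟨·,·⟩_E on E, with induced norm ‖·‖_E, such that ‖v‖_E ≤ ‖v‖ ≤ √k · ‖v‖_E for every v ∈ E. -/
/-!
Among the linear maps `M : V → F` of operator norm at most `1`, i.e. those for which the
ellipsoid `{v | ‖M v‖ ≤ 1}` contains the unit ball of `V`, take one maximizing `|det M|`
(measured against a fixed identification `V ≃ F`); it exists by compactness and is invertible.
If some `v` had `√k ‖M v‖ < ‖v‖`, a norming functional of `v`, written as `⟪w, M ·⟫`, would have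
`‖w‖² > k` and `|⟪w, M x⟫| ≤ ‖x‖`. Stretching `M` by `1 + t` in the direction of `w` and scaling
by a suitable `c < 1` keeps the operator norm at most `1` but multiplies the determinant by
`c ^ k * (1 + t) > 1`, contradicting maximality.
-/

open Module Metric
open scoped RealInnerProductSpace

theorem LinearMap.det_id_add_smulRight {R M : Type*} [CommRing R] [AddCommGroup M] [Module R M]
    [Module.Free R M] [Module.Finite R M] (φ : M →ₗ[R] R) (a : M) :
    LinearMap.det (LinearMap.id + φ.smulRight a) = 1 + φ a := by
  classical
  let b := Module.Free.chooseBasis R M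
  have hmat : LinearMap.toMatrix b b (LinearMap.id + φ.smulRight a) =
      1 + Matrix.replicateCol Unit (b.repr a) * Matrix.replicateRow Unit (fun i => φ (b i)) := by
    ext i j
    simp [LinearMap.toMatrix_apply, Matrix.one_apply, Finsupp.single_apply, Matrix.mul_apply,
      eq_comm, mul_comm]
  rw [← LinearMap.det_toMatrix b, hmat, Matrix.det_one_add_replicateCol_mul_replicateRow]
  conv_rhs => rw [← b.sum_repr a]
  simp only [dotProduct, map_sum, map_smul, smul_eq_mul, mul_comm]

theorem one_add_pow_mul_one_sub_le (k : ℕ) {r : ℝ} (h₀ : 0 ≤ r) (h₁ : r ≤ 1) :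
    (1 + r) ^ k * (1 - k * r) ≤ 1 :=
  calc (1 + r) ^ k * (1 - k * r) ≤ (1 + r) ^ k * (1 - r) ^ k := by
        gcongr
        simpa [sub_eq_add_neg] using one_add_mul_le_pow (a := -r) (by linarith) k
    _ = (1 - r ^ 2) ^ k := by rw [← mul_pow]; ring
    _ ≤ 1 := pow_le_one₀ (by nlinarith) (by nlinarith)

theorem exists_pos_one_add_pow_lt_sq {k : ℕ} {W : ℝ} (hW : k < W) :
    ∃ t > 0, (1 + (2 * t + t ^ 2) / W) ^ k < (1 + t) ^ 2 := by
  have hk : (0 : ℝ) ≤ k := k.cast_nonneg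
  set t := min 1 ((W - k) / (3 * (k + 1)))
  have ht₀ : 0 < t := lt_min one_pos (by apply div_pos <;> linarith)
  have ht₁ : t ≤ 1 := min_le_left _ _
  have ht : 3 * (k + 1) * t ≤ W - k := by
    have := min_le_right 1 ((W - k) / (3 * (k + 1)))
    rwa [le_div_iff₀' (by positivity)] at this
  set q := 2 * t + t ^ 2
  have hq₀ : 0 < q := by positivity
  have hkq : k * q < W - k := by nlinarith
  have hqW : q ≤ W := by nlinarith
  have hW₀ : 0 < W := by linarith
  have hkr : 0 < 1 - k * (q / W) := by
    rw [mul_div_assoc', sub_pos, div_lt_one hW₀]; linarith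
  refine ⟨t, ht₀, lt_of_mul_lt_mul_right ?_ hkr.le⟩
  calc (1 + q / W) ^ k * (1 - k * (q / W))
      ≤ 1 := one_add_pow_mul_one_sub_le k (by positivity) ((div_le_one hW₀).2 hqW)
    _ < 1 + q * (W - k - k * q) / W := by
        have : 0 < q * (W - k - k * q) / W := by apply div_pos (mul_pos hq₀ (by linarith)) hW₀
        linarith
    _ = (1 + t) ^ 2 * (1 - k * (q / W)) := by field_simp; ring

theorem exists_sq_mul_le_one_and_one_lt_pow_mul {k : ℕ} {W : ℝ} (hW : k < W) :
    ∃ c t : ℝ, 0 < c ∧ 0 < t ∧ c ^ 2 * (1 + (2 * t + t ^ 2) / W) ≤ 1 ∧ 1 < c ^ k * (1 + t) := by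
  obtain ⟨t, ht, hlt⟩ := exists_pos_one_add_pow_lt_sq hW
  set s := 1 + (2 * t + t ^ 2) / W
  have hW₀ : 0 < W := (Nat.cast_nonneg k).trans_lt hW
  have hs : 0 < s := by positivity
  have hc : (√s)⁻¹ ^ 2 = s⁻¹ := by rw [inv_pow, Real.sq_sqrt hs.le]
  refine ⟨(√s)⁻¹, t, by positivity, ht, by rw [hc, inv_mul_cancel₀ hs.ne'], ?_⟩
  rw [← one_lt_sq_iff₀ (by positivity), mul_pow, ← pow_mul, mul_comm k, pow_mul, hc, inv_pow,
    ← div_eq_inv_mul, one_lt_div (by positivity)]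
  exact hlt

section
variable {V F : Type*} [NormedAddCommGroup V] [NormedSpace ℝ V]
  [NormedAddCommGroup F] [InnerProductSpace ℝ F]

theorem norm_add_smul_inner_smul_sq {w : F} (hw : w ≠ 0) (t : ℝ) (y : F) :
    ‖y + (t / ‖w‖ ^ 2 * ⟪w, y⟫) • w‖ ^ 2 = ‖y‖ ^ 2 + (2 * t + t ^ 2) * ⟪w, y⟫ ^ 2 / ‖w‖ ^ 2 := by
  have : ‖w‖ ≠ 0 := norm_ne_zero_iff.2 hw
  rw [norm_add_sq_real, inner_smul_right, real_inner_comm, norm_smul, Real.norm_eq_abs, mul_pow,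
    sq_abs]
  field_simp
  ring

variable [FiniteDimensional ℝ F]

theorem exists_norm_le_one_abs_det_comp_lt (j : F →L[ℝ] V) {M : V →L[ℝ] F} (hM : ‖M‖ ≤ 1)
    (hdet : (M ∘L j).det ≠ 0) {w : F} (hw : ∀ x, |⟪w, M x⟫| ≤ ‖x‖)
    (hwk : finrank ℝ F < ‖w‖ ^ 2) :
    ∃ M' : V →L[ℝ] F, ‖M'‖ ≤ 1 ∧ |(M ∘L j).det| < |(M' ∘L j).det| := by
  -- `M x ↦ c • (M x + (t / ‖w‖²) ⟪w, M x⟫ w)`: since `|⟪w, M x⟫| ≤ ‖x‖` with `‖w‖² > k`, the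
  -- stretch costs less in norm than it gains in determinant.
  obtain ⟨c, t, hc, ht, hct, hdet_gt⟩ := exists_sq_mul_le_one_and_one_lt_pow_mul hwk
  have hW : 0 < ‖w‖ ^ 2 := (Nat.cast_nonneg _).trans_lt hwk
  have hw₀ : w ≠ 0 := by rintro rfl; simp at hW
  let L : F →L[ℝ] F := 1 + ((t / ‖w‖ ^ 2) • innerSL ℝ w).smulRight w
  have hL : ∀ y, L y = y + (t / ‖w‖ ^ 2 * ⟪w, y⟫) • w := fun y => by simp [L]
  have hL_det : L.det = 1 + t := by
    have : (L : F →ₗ[ℝ] F) = LinearMap.id + ((t / ‖w‖ ^ 2) • innerₛₗ ℝ w).smulRight w := by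
      ext y; simp [hL]
    rw [ContinuousLinearMap.det, this, LinearMap.det_id_add_smulRight]
    simp [field]
  refine ⟨c • (L ∘L M), ?_, ?_⟩
  · refine ContinuousLinearMap.opNorm_le_bound _ zero_le_one fun x => ?_
    have hMx : ‖M x‖ ≤ ‖x‖ := by simpa using M.le_of_opNorm_le hM x
    have hwx : ⟪w, M x⟫ ^ 2 ≤ ‖x‖ ^ 2 := sq_le_sq' (abs_le.1 (hw x)).1 (abs_le.1 (hw x)).2
    rw [one_mul, ← sq_le_sq₀ (norm_nonneg _) (norm_nonneg _)]
    calc ‖(c • (L ∘L M)) x‖ ^ 2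
        = c ^ 2 * (‖M x‖ ^ 2 + (2 * t + t ^ 2) * ⟪w, M x⟫ ^ 2 / ‖w‖ ^ 2) := by
          simp only [FunLike.coe_smul, Pi.smul_apply, ContinuousLinearMap.comp_apply, hL, norm_smul,
            mul_pow, Real.norm_eq_abs, sq_abs, norm_add_smul_inner_smul_sq hw₀]
      _ ≤ c ^ 2 * (‖x‖ ^ 2 + (2 * t + t ^ 2) * ‖x‖ ^ 2 / ‖w‖ ^ 2) := by gcongr
      _ = c ^ 2 * (1 + (2 * t + t ^ 2) / ‖w‖ ^ 2) * ‖x‖ ^ 2 := by ring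
      _ ≤ ‖x‖ ^ 2 := mul_le_of_le_one_left (by positivity) hct
  · have : ((c • (L ∘L M)) ∘L j).det = c ^ finrank ℝ F * (1 + t) * (M ∘L j).det := by
      rw [ContinuousLinearMap.smul_comp, ContinuousLinearMap.comp_assoc, ContinuousLinearMap.det,
        ContinuousLinearMap.toLinearMap_smul, LinearMap.det_smul,
        ContinuousLinearMap.toLinearMap_comp, LinearMap.det_comp, ← ContinuousLinearMap.det, hL_det,
        mul_assoc]
    rw [this, abs_mul, abs_of_pos (by positivity : 0 < c ^ finrank ℝ F * (1 + t))]
    exact lt_mul_left (abs_pos.2 hdet) hdet_gt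

theorem exists_inner_apply_eq (g : V ≃ₗ[ℝ] F) (φ : V →ₗ[ℝ] ℝ) : ∃ w : F, ∀ x, ⟪w, g x⟫ = φ x :=
  ⟨(InnerProductSpace.toDual ℝ F).symm (φ ∘ₗ g.symm).toContinuousLinearMap, fun x => by
    simp [InnerProductSpace.toDual_symm_apply]⟩

theorem bijective_of_det_comp_symm_ne_zero (e : V ≃L[ℝ] F) {M : V →L[ℝ] F}
    (hdet : (M ∘L (e.symm : F →L[ℝ] V)).det ≠ 0) : Function.Bijective M := by
  have h := (Module.End.isUnit_iff _).1
    ((LinearMap.isUnit_iff_isUnit_det _).2 (isUnit_iff_ne_zero.2 hdet))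
  have : (M : V → F) = (M ∘L (e.symm : F →L[ℝ] V)) ∘ e := by ext x; simp
  rw [this]
  exact h.comp e.bijective

theorem norm_le_sqrt_finrank_mul_of_isMaxOn (e : V ≃L[ℝ] F) {M : V →L[ℝ] F} (hM : ‖M‖ ≤ 1)
    (hmax : IsMaxOn (fun T : V →L[ℝ] F => |(T ∘L (e.symm : F →L[ℝ] V)).det|) (closedBall 0 1) M)
    (hdet : (M ∘L (e.symm : F →L[ℝ] V)).det ≠ 0) (v : V) :
    ‖v‖ ≤ √(finrank ℝ F) * ‖M v‖ := by
  by_contra! hv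
  have hv₀ : ‖v‖ ≠ 0 := ((mul_nonneg (Real.sqrt_nonneg _) (norm_nonneg _)).trans_lt hv).ne'
  obtain ⟨φ, hφ, hφv⟩ := exists_dual_vector ℝ v hv₀
  obtain ⟨w, hw⟩ := exists_inner_apply_eq
    (LinearEquiv.ofBijective (M : V →ₗ[ℝ] F) (bijective_of_det_comp_symm_ne_zero e hdet)) φ
  simp only [LinearEquiv.ofBijective_apply, ContinuousLinearMap.coe_coe] at hw
  have hw_le : ∀ x, |⟪w, M x⟫| ≤ ‖x‖ := fun x => by
    simpa [hw, hφ] using φ.le_opNorm x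
  have hwk : finrank ℝ F < ‖w‖ ^ 2 := by
    have : ‖v‖ ≤ ‖w‖ * ‖M v‖ := by
      simpa [hw, hφv] using real_inner_le_norm w (M v)
    have hMv : 0 < ‖M v‖ := by
      have := (norm_nonneg v).lt_of_ne' hv₀
      nlinarith [norm_nonneg w, norm_nonneg (M v)]
    have hsqrt : √(finrank ℝ F) < ‖w‖ := lt_of_mul_lt_mul_right (hv.trans_le this) hMv.le
    exact (Real.sqrt_lt' ((Real.sqrt_nonneg _).trans_lt hsqrt)).1 hsqrt
  obtain ⟨M', hM', hlt⟩ := exists_norm_le_one_abs_det_comp_lt _ hM hdet hw_le hwk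
  exact (hmax (mem_closedBall_zero_iff.2 hM')).not_gt hlt

theorem exists_isMaxOn_abs_det_comp_symm [FiniteDimensional ℝ V] (e : V ≃L[ℝ] F) :
    ∃ M ∈ closedBall (0 : V →L[ℝ] F) 1,
      IsMaxOn (fun T : V →L[ℝ] F => |(T ∘L (e.symm : F →L[ℝ] V)).det|) (closedBall 0 1) M ∧
      (M ∘L (e.symm : F →L[ℝ] V)).det ≠ 0 := by
  have hcont : Continuous fun T : V →L[ℝ] F => |(T ∘L (e.symm : F →L[ℝ] V)).det| :=
    (ContinuousLinearMap.continuous_det.comp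
      ((ContinuousLinearMap.compL ℝ F V F).flip e.symm).continuous).abs
  obtain ⟨M, hM, hmax⟩ := (isCompact_closedBall (0 : V →L[ℝ] F) 1).exists_isMaxOn
    (nonempty_closedBall.2 zero_le_one) hcont.continuousOn
  refine ⟨M, hM, hmax, fun h => ?_⟩
  set ε := (‖(e : V →L[ℝ] F)‖ + 1)⁻¹
  have hε : ε • (e : V →L[ℝ] F) ∈ closedBall 0 1 := by
    rw [mem_closedBall_zero_iff, norm_smul, Real.norm_eq_abs, abs_of_pos (by positivity)]
    exact inv_mul_le_one_of_le₀ (by linarith) (by positivity)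
  have hdet_ε : ((ε • (e : V →L[ℝ] F)) ∘L (e.symm : F →L[ℝ] V)).det = ε ^ finrank ℝ F := by
    rw [ContinuousLinearMap.smul_comp, e.coe_comp_coe_symm, ContinuousLinearMap.det,
      ContinuousLinearMap.toLinearMap_smul, LinearMap.det_smul]
    simp
  have hle : |((ε • (e : V →L[ℝ] F)) ∘L (e.symm : F →L[ℝ] V)).det| ≤
      |(M ∘L (e.symm : F →L[ℝ] V)).det| := hmax hε
  rw [h, hdet_ε, abs_zero] at hle
  exact hle.not_gt (by positivity)

theorem exists_linearEquiv_norm_le_and_le_sqrt_finrank_mul [FiniteDimensional ℝ V]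
    (h : finrank ℝ V = finrank ℝ F) :
    ∃ g : V ≃ₗ[ℝ] F, ∀ v, ‖g v‖ ≤ ‖v‖ ∧ ‖v‖ ≤ √(finrank ℝ F) * ‖g v‖ := by
  let e : V ≃L[ℝ] F := (LinearEquiv.ofFinrankEq V F h).toContinuousLinearEquiv
  obtain ⟨M, hM, hmax, hdet⟩ := exists_isMaxOn_abs_det_comp_symm e
  rw [mem_closedBall_zero_iff] at hM
  refine ⟨.ofBijective (M : V →ₗ[ℝ] F) (bijective_of_det_comp_symm_ne_zero e hdet), fun v =>
    ⟨?_, norm_le_sqrt_finrank_mul_of_isMaxOn e hM hmax hdet v⟩⟩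
  simpa using M.le_of_opNorm_le hM v

end

/-- John's theorem: a `k`-dimensional subspace `E` of a Banach space admits an
inner-product norm (realized here by a linear equivalence with Euclidean space, whose norm is
induced by an inner product) such that `‖v‖_E ≤ ‖v‖ ≤ √k ⬝ ‖v‖_E` for all `v ∈ E`. -/
theorem john_theorem {B : Type*} [NormedAddCommGroup B] [NormedSpace ℝ B]
    (E : Subspace ℝ B) [FiniteDimensional ℝ E] (k : ℕ) (hk : Module.finrank ℝ E = k) :
    ∃ g : E ≃ₗ[ℝ] EuclideanSpace ℝ (Fin k),
      ∀ v : E, ‖g v‖ ≤ ‖v‖ ∧ ‖v‖ ≤ Real.sqrt k * ‖g v‖ := by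
  simpa using exists_linearEquiv_norm_le_and_le_sqrt_finrank_mul (V := E)
    (F := EuclideanSpace ℝ (Fin k)) (by simp [hk])
end

section
/- Suppose F : X → ℝ is measurable with lim_{n→±∞} (1/n) F(fⁿ x) = 0 for μ-a.e. x, where f is an invertible μ-preserving map. Then for every ε > 0 there exists a measurable function C : X → (0,∞), finite μ-a.e., such that e^{F(x)} ≤ C(x) and C(fⁿ x) ≤ C(x) e^{ε|n|} for all n ∈ ℤ and μ-a.e. x. -/
open Filter MeasureTheory Set Topology Equiv

/-!
Take `C = exp S` with `S x = sup_{k ∈ ℤ} (F(fᵏ x) - ε|k|)`. The growth condition on `F` makes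
`F(fᵏ x) - ε|k|` tend to `-∞` in both directions, so the supremum is finite a.e.; the term
`k = 0` gives `F ≤ S`, and since `|k + m| ≤ |k| + |m|`, shifting the orbit by `m` costs at most
`ε|m|`, i.e. `S(fᵐ x) ≤ S x + ε|m|`.
-/

namespace Equiv.Perm

variable {X : Type*} (e : Perm X)

lemma coe_zpow_natCast (n : ℕ) : ⇑(e ^ (n : ℤ)) = e^[n] := by
  rw [zpow_natCast, coe_pow]

lemma coe_zpow_neg_natCast (n : ℕ) : ⇑(e ^ (-(n : ℤ))) = e.symm^[n] := by
  rw [zpow_neg, zpow_natCast, ← inv_pow, coe_pow, inv_def]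

lemma measurable_coe_zpow [MeasurableSpace X] (he : Measurable e) (he' : Measurable e.symm)
    (k : ℤ) : Measurable ⇑(e ^ k) := by
  rcases Int.eq_nat_or_neg k with ⟨n, rfl | rfl⟩
  · rw [coe_zpow_natCast]; exact he.iterate n
  · rw [coe_zpow_neg_natCast]; exact he'.iterate n

end Equiv.Perm

lemma bddAbove_range_sub_mul_of_tendsto_inv_mul {a : ℕ → ℝ} {ε : ℝ} (hε : 0 < ε)
    (ha : Tendsto (fun n : ℕ => (n : ℝ)⁻¹ * a n) atTop (𝓝 0)) :
    BddAbove (range fun n : ℕ => a n - ε * n) := by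
  refine (isBoundedUnder_of_eventually_le (a := 0) ?_).bddAbove_range
  filter_upwards [ha.eventually_lt_const hε, eventually_gt_atTop 0] with n hn hn0
  rw [inv_mul_lt_iff₀ (by exact_mod_cast hn0)] at hn
  linarith

section TemperedSup

variable {X : Type*} (e : Perm X) (F : X → ℝ) (ε : ℝ) {x : X}

/-- Outside the set where the family is bounded above this takes the junk value `0`. -/
noncomputable def temperedSup (x : X) : ℝ :=
  ⨆ k : ℤ, F ((e ^ k) x) - ε * |(k : ℝ)|

lemma sub_mul_abs_le_temperedSup
    (hx : BddAbove (range fun k : ℤ => F ((e ^ k) x) - ε * |(k : ℝ)|)) (k : ℤ) :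
    F ((e ^ k) x) - ε * |(k : ℝ)| ≤ temperedSup e F ε x :=
  le_ciSup hx k

lemma le_temperedSup (hx : BddAbove (range fun k : ℤ => F ((e ^ k) x) - ε * |(k : ℝ)|)) :
    F x ≤ temperedSup e F ε x := by
  simpa using sub_mul_abs_le_temperedSup e F ε hx 0

lemma temperedSup_zpow_apply_le (hε : 0 ≤ ε)
    (hx : BddAbove (range fun k : ℤ => F ((e ^ k) x) - ε * |(k : ℝ)|)) (m : ℤ) :
    temperedSup e F ε ((e ^ m) x) ≤ temperedSup e F ε x + ε * |(m : ℝ)| := by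
  refine ciSup_le fun k => ?_
  have hkm := sub_mul_abs_le_temperedSup e F ε hx (k + m)
  rw [zpow_add, Perm.mul_apply] at hkm
  have htri : |((k + m : ℤ) : ℝ)| ≤ |(k : ℝ)| + |(m : ℝ)| := by
    push_cast; exact abs_add_le _ _
  nlinarith [mul_le_mul_of_nonneg_left htri hε]

lemma measurable_temperedSup [MeasurableSpace X] (he : ∀ k : ℤ, Measurable ⇑(e ^ k))
    (hF : Measurable F) : Measurable (temperedSup e F ε) :=
  Measurable.iSup fun k => (hF.comp (he k)).sub_const _

lemma bddAbove_range_zpow_of_tendsto (hε : 0 < ε)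
    (hfwd : Tendsto (fun n : ℕ => (n : ℝ)⁻¹ * F (e^[n] x)) atTop (𝓝 0))
    (hbwd : Tendsto (fun n : ℕ => (n : ℝ)⁻¹ * F (e.symm^[n] x)) atTop (𝓝 0)) :
    BddAbove (range fun k : ℤ => F ((e ^ k) x) - ε * |(k : ℝ)|) := by
  obtain ⟨B₁, hB₁⟩ := bddAbove_range_sub_mul_of_tendsto_inv_mul hε hfwd
  obtain ⟨B₂, hB₂⟩ := bddAbove_range_sub_mul_of_tendsto_inv_mul hε hbwd
  refine ⟨max B₁ B₂, ?_⟩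
  rintro _ ⟨k, rfl⟩
  rcases Int.eq_nat_or_neg k with ⟨n, rfl | rfl⟩
  · show F ((e ^ (n : ℤ)) x) - ε * |((n : ℤ) : ℝ)| ≤ _
    rw [Perm.coe_zpow_natCast, Int.cast_natCast, Nat.abs_cast]
    exact le_max_of_le_left (hB₁ ⟨n, rfl⟩)
  · show F ((e ^ (-(n : ℤ))) x) - ε * |((-(n : ℤ) : ℤ) : ℝ)| ≤ _
    rw [Perm.coe_zpow_neg_natCast, Int.cast_neg, abs_neg, Int.cast_natCast, Nat.abs_cast]
    exact le_max_of_le_right (hB₂ ⟨n, rfl⟩)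

end TemperedSup

theorem tempering_kernel_general {X : Type*} [MeasurableSpace X] (μ : Measure X)
    (f g : X → X) (hfm : Measurable f) (hgm : Measurable g)
    (hgf : Function.LeftInverse g f) (hfg : Function.RightInverse g f)
    (F : X → ℝ) (hF : Measurable F)
    (htemp : ∀ᵐ x ∂μ,
      Tendsto (fun n : ℕ => (n : ℝ)⁻¹ * F (f^[n] x)) atTop (nhds 0) ∧
      Tendsto (fun n : ℕ => (n : ℝ)⁻¹ * F (g^[n] x)) atTop (nhds 0))
    (ε : ℝ) (hε : 0 < ε) :
    ∃ C : X → ℝ, Measurable C ∧ ∀ᵐ x ∂μ,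
      0 < C x ∧ Real.exp (F x) ≤ C x ∧
      ∀ n : ℕ, C (f^[n] x) ≤ C x * Real.exp (ε * n) ∧
        C (g^[n] x) ≤ C x * Real.exp (ε * n) := by
  let e : Perm X := ⟨f, g, hgf, hfg⟩
  set S := temperedSup e F ε
  refine ⟨fun x => Real.exp (S x),
    (measurable_temperedSup e F ε (e.measurable_coe_zpow hfm hgm) hF).exp, ?_⟩
  filter_upwards [htemp] with x ⟨hfwd, hbwd⟩
  have hx := bddAbove_range_zpow_of_tendsto e F ε hε hfwd hbwd
  have hshift (m : ℤ) : Real.exp (S ((e ^ m) x)) ≤ Real.exp (S x) * Real.exp (ε * |(m : ℝ)|) := by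
    rw [← Real.exp_add]
    exact Real.exp_le_exp.2 (temperedSup_zpow_apply_le e F ε hε.le hx m)
  refine ⟨Real.exp_pos _, Real.exp_le_exp.2 (le_temperedSup e F ε hx), fun n => ⟨?_, ?_⟩⟩
  · have h := hshift n
    rw [Perm.coe_zpow_natCast, Int.cast_natCast, Nat.abs_cast] at h
    exact h
  · have h := hshift (-n)
    rw [Perm.coe_zpow_neg_natCast, Int.cast_neg, abs_neg, Int.cast_natCast, Nat.abs_cast] at h
    exact h

/-- tempering kernel: if `F(fⁿ x)/n → 0` as `n → ±∞` a.e. for an invertible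
bi-measurable measure-preserving `f`, then for every `ε > 0` there is a measurable
`C : X → (0,∞)`, finite a.e., with `e^{F(x)} ≤ C(x)` and `C(fⁿ x) ≤ C(x) e^{ε|n|}`
for all `n ∈ ℤ` and a.e. `x`. -/
theorem tempering_kernel {X : Type*} [MeasurableSpace X] (μ : Measure X)
    [IsProbabilityMeasure μ] (f g : X → X) (hfm : Measurable f) (hgm : Measurable g)
    (hgf : Function.LeftInverse g f) (hfg : Function.RightInverse g f)
    (hf : MeasurePreserving f μ μ)
    (F : X → ℝ) (hF : Measurable F)
    (htemp : ∀ᵐ x ∂μ,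
      Tendsto (fun n : ℕ => (n : ℝ)⁻¹ * F (f^[n] x)) atTop (nhds 0) ∧
      Tendsto (fun n : ℕ => (n : ℝ)⁻¹ * F (g^[n] x)) atTop (nhds 0))
    (ε : ℝ) (hε : 0 < ε) :
    ∃ C : X → ℝ, Measurable C ∧ ∀ᵐ x ∂μ,
      0 < C x ∧ Real.exp (F x) ≤ C x ∧
      ∀ n : ℕ, C (f^[n] x) ≤ C x * Real.exp (ε * n) ∧
        C (g^[n] x) ≤ C x * Real.exp (ε * n) :=
  tempering_kernel_general μ f g hfm hgm hgf hfg F hF htemp ε hε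
end

section
/- Let A, B be linear operators on a Banach space with a splitting into components E and V such that ‖(Au)_E‖ ≥ a‖u_E‖, ‖(Au)_V‖ ≤ b‖u_V‖ for all u, and ‖Bu − Au‖ ≤ ε‖u_E‖ for all u in the cone C_0 = {‖u_V‖ ≤ ‖u_E‖}. If a − b − 2ε > 0, then there exists γ ∈ (0,1) such that for every u ∈ C_0 with u ≠ 0, the image w = Bu satisfies ‖w_E‖ − ‖w_V‖ ≥ γ‖w_E‖, i.e. B maps C_0 into the smaller cone C_γ = {‖w_V‖ ≤ (1−γ)‖w_E‖}. -/
/-- cone invariance: if `S` expands the `E`-component by `a` (and bounds it above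
by `a'`), contracts the `V`-component by `b`, and `T` is an `ε`-perturbation of `S` on the cone
`C₀ = {‖u_V‖ ≤ ‖u_E‖}` with `a − b − 2ε > 0`, then there is `γ ∈ (0,1)` such that for every
nonzero `u ∈ C₀` the image `w = T u` satisfies `‖w_E‖ − ‖w_V‖ ≥ γ‖w_E‖`, i.e. `T` maps `C₀`
into the smaller cone `C_γ`. -/
theorem cone_invariance {B : Type*} [NormedAddCommGroup B] [NormedSpace ℝ B]
    (pE pV : B →ₗ[ℝ] B) (hsplit : ∀ u : B, pE u + pV u = u)
    (hpE : ∀ w : B, ‖pE w‖ ≤ ‖w‖) (hpV : ∀ w : B, ‖pV w‖ ≤ ‖w‖)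
    (S T : B →L[ℝ] B) (a a' b ε : ℝ)
    (ha : 0 < a) (ha' : a ≤ a') (hb : 0 ≤ b) (hε : 0 < ε)
    (hlow : ∀ u : B, a * ‖pE u‖ ≤ ‖pE (S u)‖)
    (hup : ∀ u : B, ‖pE (S u)‖ ≤ a' * ‖pE u‖)
    (hcontr : ∀ u : B, ‖pV (S u)‖ ≤ b * ‖pV u‖)
    (hpert : ∀ u : B, ‖pV u‖ ≤ ‖pE u‖ → ‖T u - S u‖ ≤ ε * ‖pE u‖)
    (hgap : 0 < a - b - 2 * ε) :
    ∃ γ : ℝ, 0 < γ ∧ γ < 1 ∧ ∀ u : B, u ≠ 0 → ‖pV u‖ ≤ ‖pE u‖ →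
      γ * ‖pE (T u)‖ ≤ ‖pE (T u)‖ - ‖pV (T u)‖ := by
  have hden : 0 < a' + ε := by linarith
  refine ⟨(a - b - 2 * ε) / (a' + ε), div_pos hgap hden, ?_, ?_⟩
  · rw [div_lt_one hden]; linarith
  · intro u hu hc
    have huE : 0 < ‖pE u‖ := by
      rcases (norm_nonneg (pE u)).lt_or_eq with h | h
      · exact h
      · exfalso
        apply hu
        have h1 : pE u = 0 := by rwa [eq_comm, norm_eq_zero] at h
        have h2 : pV u = 0 := by
          have : ‖pV u‖ ≤ 0 := by rw [h1, norm_zero] at hc; exact hc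
          exact norm_eq_zero.mp (le_antisymm this (norm_nonneg _))
        have := hsplit u
        rw [h1, h2, add_zero] at this; exact this.symm
    have hdiff := hpert u hc
    have hEd : ‖pE (T u) - pE (S u)‖ ≤ ε * ‖pE u‖ := by
      calc ‖pE (T u) - pE (S u)‖ = ‖pE (T u - S u)‖ := by rw [map_sub]
        _ ≤ ‖T u - S u‖ := hpE _
        _ ≤ ε * ‖pE u‖ := hdiff
    have hVd : ‖pV (T u) - pV (S u)‖ ≤ ε * ‖pE u‖ := by
      calc ‖pV (T u) - pV (S u)‖ = ‖pV (T u - S u)‖ := by rw [map_sub]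
        _ ≤ ‖T u - S u‖ := hpV _
        _ ≤ ε * ‖pE u‖ := hdiff
    have hElow : (a - ε) * ‖pE u‖ ≤ ‖pE (T u)‖ := by
      have h1 := hlow u
      have h2 : ‖pE (S u)‖ - ‖pE (T u)‖ ≤ ε * ‖pE u‖ :=
        (norm_sub_norm_le _ _).trans (by rw [norm_sub_rev]; exact hEd)
      linarith
    have hEup : ‖pE (T u)‖ ≤ (a' + ε) * ‖pE u‖ := by
      have h1 := hup u
      have h2 : ‖pE (T u)‖ - ‖pE (S u)‖ ≤ ε * ‖pE u‖ :=
        le_trans (norm_sub_norm_le _ _) hEd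
      linarith
    have hVup : ‖pV (T u)‖ ≤ (b + ε) * ‖pE u‖ := by
      have h1 : ‖pV (S u)‖ ≤ b * ‖pE u‖ :=
        le_trans (hcontr u) (mul_le_mul_of_nonneg_left hc hb)
      have h2 : ‖pV (T u)‖ - ‖pV (S u)‖ ≤ ε * ‖pE u‖ :=
        le_trans (norm_sub_norm_le _ _) hVd
      linarith
    rw [div_mul_eq_mul_div, div_le_iff₀ hden]
    nlinarith [norm_nonneg (pE (T u))]
end
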